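/- Define the state-evolution map F(τ²) = σ² + (1/δ)·E[(η(B₀ + τZ; ατ) − B₀)²] for τ > 0, where α > 0, δ > 0, σ² ≥ 0, Z ~ N(0,1) independent of B₀ with E[B₀²] < ∞. Then F is monotone nondecreasing in τ², i.e., τ₁ ≤ τ₂ implies F(τ₁²) ≤ F(τ₂²). -/

import Mathlib

/-!
With `x = b + τ z`, the soft-threshold residual `η(x; ατ) − b` is the projection of `−b` onto the
interval `τ • [z − α, z + α]`. As `τ` grows this interval is dilated from the origin, so the
projection stays on one side of `0` and moves away from it: the squared residual is
nondecreasing in `τ` for every `(b, z)`. Integrating gives the claim; the larger integrand is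
integrable because `|η(x; θ)| ≤ |x|` and `B₀`, `Z` are square integrable.
-/

open MeasureTheory ProbabilityTheory

/-- Soft thresholding function. -/
noncomputable def softThresh (x θ : ℝ) : ℝ :=
  if x > θ then x - θ else if x < -θ then x + θ else 0

lemma softThresh_add_mul_sub_eq_max_min {α τ : ℝ} (h : 0 ≤ α * τ) (b z : ℝ) :
    softThresh (b + τ * z) (α * τ) - b = max (τ * (z - α)) (min (-b) (τ * (z + α))) := by
  unfold softThresh
  split_ifs with h₁ h₂
  · rw [min_eq_left (by linarith), max_eq_left (by linarith)]; ring
  · rw [min_eq_right (by linarith), max_eq_right (by linarith)]; ring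
  · rw [min_eq_left (by linarith), max_eq_right (by linarith)]; ring

lemma sq_le_sq_of_mem_uIcc {x y : ℝ} (h : y ∈ Set.uIcc 0 x) : y ^ 2 ≤ x ^ 2 := by
  rcases Set.mem_uIcc.1 h with ⟨h₀, h₁⟩ | ⟨h₀, h₁⟩ <;> nlinarith

lemma max_min_mul_mem_uIcc {a c p s t : ℝ} (hac : a ≤ c) (hs : 0 ≤ s) (hst : s ≤ t) :
    max (s * a) (min p (s * c)) ∈ Set.uIcc 0 (max (t * a) (min p (t * c))) := by
  have ht : 0 ≤ t := hs.trans hst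
  rw [Set.mem_uIcc]
  rcases le_total 0 a with ha | ha
  · refine Or.inl ⟨le_max_of_le_left (mul_nonneg hs ha), max_le_max ?_ (min_le_min_left p ?_)⟩
    · exact mul_le_mul_of_nonneg_right hst ha
    · exact mul_le_mul_of_nonneg_right hst (ha.trans hac)
  rcases le_total c 0 with hc | hc
  · refine Or.inr ⟨max_le_max ?_ (min_le_min_left p ?_), max_le ?_ (min_le_of_right_le ?_)⟩
    · exact mul_le_mul_of_nonpos_right hst ha
    · exact mul_le_mul_of_nonpos_right hst hc
    · exact mul_nonpos_of_nonneg_of_nonpos hs ha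
    · exact mul_nonpos_of_nonneg_of_nonpos hs hc
  have hsa : s * a ≤ 0 := mul_nonpos_of_nonneg_of_nonpos hs ha
  have hta : t * a ≤ 0 := mul_nonpos_of_nonneg_of_nonpos ht ha
  have hsc : 0 ≤ s * c := mul_nonneg hs hc
  have htc : 0 ≤ t * c := mul_nonneg ht hc
  rcases le_total 0 p with hp | hp
  · rw [max_eq_right (hsa.trans (le_min hp hsc)), max_eq_right (hta.trans (le_min hp htc))]
    exact Or.inl ⟨le_min hp hsc, min_le_min_left p (mul_le_mul_of_nonneg_right hst hc)⟩
  · rw [min_eq_left (hp.trans hsc), min_eq_left (hp.trans htc)]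
    exact Or.inr ⟨max_le_max_right p (mul_le_mul_of_nonpos_right hst ha), max_le hsa hp⟩

lemma sq_softThresh_add_mul_sub_le {α τ₁ τ₂ : ℝ} (hα : 0 ≤ α) (hτ₁ : 0 ≤ τ₁) (hτ : τ₁ ≤ τ₂)
    (b z : ℝ) :
    (softThresh (b + τ₁ * z) (α * τ₁) - b) ^ 2 ≤ (softThresh (b + τ₂ * z) (α * τ₂) - b) ^ 2 := by
  rw [softThresh_add_mul_sub_eq_max_min (mul_nonneg hα hτ₁),
    softThresh_add_mul_sub_eq_max_min (mul_nonneg hα (hτ₁.trans hτ))]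
  exact sq_le_sq_of_mem_uIcc (max_min_mul_mem_uIcc (by linarith) hτ₁ hτ)

lemma abs_softThresh_le {θ : ℝ} (hθ : 0 ≤ θ) (x : ℝ) : |softThresh x θ| ≤ |x| := by
  unfold softThresh
  split_ifs with h₁ h₂
  · rw [abs_of_pos (by linarith), abs_of_pos (by linarith)]; linarith
  · rw [abs_of_neg (by linarith), abs_of_neg (by linarith)]; linarith
  · simp

lemma measurable_softThresh (θ : ℝ) : Measurable (softThresh · θ) := by
  unfold softThresh
  refine Measurable.ite (measurableSet_lt measurable_const measurable_id) (by fun_prop) ?_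
  exact Measurable.ite (measurableSet_lt measurable_id measurable_const) (by fun_prop) (by fun_prop)

lemma MeasureTheory.MemLp.softThresh {Ω : Type*} [MeasurableSpace Ω] {μ : Measure Ω}
    {p : ENNReal} {X : Ω → ℝ} (hX : MemLp X p μ) {θ : ℝ} (hθ : 0 ≤ θ) :
    MemLp (fun ω => _root_.softThresh (X ω) θ) p μ :=
  hX.of_le ((measurable_softThresh θ).comp_aemeasurable hX.aemeasurable).aestronglyMeasurable
    (ae_of_all _ fun ω => abs_softThresh_le hθ (X ω))

theorem stateEvolution_monotone_general {Ω : Type*} [MeasureSpace Ω]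
    (μ : Measure Ω) [IsProbabilityMeasure μ]
    (B₀ Z : Ω → ℝ) (hB : Measurable B₀) (hZ : Measurable Z)
    (hZlaw : μ.map Z = gaussianReal 0 1)
    (hB2 : Integrable (fun ω => (B₀ ω)^2) μ)
    (α δ σ2 : ℝ) (hα : 0 < α) (hδ : 0 < δ)
    (τ₁ τ₂ : ℝ) (hτ₁ : 0 < τ₁) (hττ : τ₁ ≤ τ₂) :
    σ2 + (1/δ) * ∫ ω, (softThresh (B₀ ω + τ₁ * Z ω) (α * τ₁) - B₀ ω)^2 ∂μ ≤
    σ2 + (1/δ) * ∫ ω, (softThresh (B₀ ω + τ₂ * Z ω) (α * τ₂) - B₀ ω)^2 ∂μ := by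
  have hB₀ : MemLp B₀ 2 μ := (memLp_two_iff_integrable_sq hB.aestronglyMeasurable).2 hB2
  have hZ₀ : MemLp Z 2 μ := (hZlaw ▸ memLp_id_gaussianReal 2).comp_of_map hZ.aemeasurable
  have hθ₂ : 0 ≤ α * τ₂ := mul_nonneg hα.le (hτ₁.le.trans hττ)
  have hint : Integrable (fun ω => (softThresh (B₀ ω + τ₂ * Z ω) (α * τ₂) - B₀ ω) ^ 2) μ :=
    (((hB₀.add (hZ₀.const_mul τ₂)).softThresh hθ₂).sub hB₀).integrable_sq
  gcongr σ2 + _ * ?_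
  exact integral_mono_of_nonneg (ae_of_all _ fun _ => sq_nonneg _) hint
    (ae_of_all _ fun ω => sq_softThresh_add_mul_sub_le hα.le hτ₁.le hττ (B₀ ω) (Z ω))

/-- The state-evolution map `F(τ²) = σ² + (1/δ) E[(η(B₀ + τZ; ατ) − B₀)²]` is monotone
nondecreasing in `τ²`: if `0 < τ₁ ≤ τ₂` then `F(τ₁²) ≤ F(τ₂²)`. Here `Z ~ N(0,1)` is
independent of `B₀`, which has finite second moment. -/
theorem stateEvolution_monotone {Ω : Type*} [MeasureSpace Ω]
    (μ : Measure Ω) [IsProbabilityMeasure μ]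
    (B₀ Z : Ω → ℝ) (hB : Measurable B₀) (hZ : Measurable Z)
    (hZlaw : μ.map Z = gaussianReal 0 1)
    (hindep : ProbabilityTheory.IndepFun B₀ Z μ)
    (hB2 : Integrable (fun ω => (B₀ ω)^2) μ)
    (α δ σ2 : ℝ) (hα : 0 < α) (hδ : 0 < δ) (hσ : 0 ≤ σ2)
    (τ₁ τ₂ : ℝ) (hτ₁ : 0 < τ₁) (hττ : τ₁ ≤ τ₂) :
    σ2 + (1/δ) * ∫ ω, (softThresh (B₀ ω + τ₁ * Z ω) (α * τ₁) - B₀ ω)^2 ∂μ ≤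
    σ2 + (1/δ) * ∫ ω, (softThresh (B₀ ω + τ₂ * Z ω) (α * τ₂) - B₀ ω)^2 ∂μ :=
  stateEvolution_monotone_general μ B₀ Z hB hZ hZlaw hB2 α δ σ2 hα hδ τ₁ τ₂ hτ₁ hττ
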